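/- Fix integers k ≥ 1 and 1 ≤ δ ≤ k. Then, as n → ∞ and uniformly over all choices of k-subsets w1, w2 of {1,…,n} with |w1 ∩ w2| = k − δ: k·n·S1 → 1, k²·n²·S2 → 1, and k·n·(S1 + S1') → 1. -/

import Mathlib

open Matrix

/-- Vertices of the Johnson graph `J(n,k)`: the `k`-element subsets of `{1,…,n}`. -/
abbrev JV (n k : ℕ) := {s : Finset (Fin n) // s.card = k}

/-- The Johnson graph `J(n,k)`. -/
def JohnsonGraph (n k : ℕ) : SimpleGraph (JV n k) where
  Adj v w := (v.1 ∩ w.1).card = k - 1 ∧ v ≠ w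
  symm := by
    constructor
    intro v w h
    exact ⟨by rw [Finset.inter_comm]; exact h.1, h.2.symm⟩
  loopless := by constructor; intro v h; exact h.2 rfl

instance (n k : ℕ) : DecidableRel (JohnsonGraph n k).Adj :=
  fun _ _ => instDecidableAnd

/-- The (real) adjacency matrix of the Johnson graph `J(n,k)`. -/
noncomputable def JA (n k : ℕ) : Matrix (JV n k) (JV n k) ℝ :=
  (JohnsonGraph n k).adjMatrix ℝ

/-- The search Hamiltonian `H = -γ•A - e_{w1} e_{w1}ᵀ - e_{w2} e_{w2}ᵀ` on `J(n,k)`. -/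
noncomputable def JH (n k : ℕ) (w1 w2 : JV n k) (γ : ℝ) : Matrix (JV n k) (JV n k) ℝ :=
  (-γ) • JA n k - Matrix.vecMulVec (Pi.single w1 1) (Pi.single w1 1)
    - Matrix.vecMulVec (Pi.single w2 1) (Pi.single w2 1)

/-- `μ` is a (real) eigenvalue of the matrix `M`. -/
def IsEig {V : Type*} [Fintype V] (M : Matrix V V ℝ) (μ : ℝ) : Prop :=
  ∃ x, x ≠ 0 ∧ M.mulVec x = μ • x

/-- The action of a permutation of `{1,…,n}` on `k`-subsets. -/
def permAct {n k : ℕ} (g : Equiv.Perm (Fin n)) (v : JV n k) : JV n k :=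
  ⟨v.1.image ⇑g, by rw [Finset.card_image_of_injective _ g.injective]; exact v.2⟩

/-- `g` fixes the set `{w1, w2}` of marked vertices setwise. -/
def fixesW {n k : ℕ} (w1 w2 : JV n k) (g : Equiv.Perm (Fin n)) : Prop :=
  ({permAct g w1, permAct g w2} : Finset (JV n k)) = {w1, w2}

/-- The subspace `H_inv` of vectors invariant under the group `𝔊` of permutations
fixing `{w1, w2}` setwise. -/
def Hinv {n k : ℕ} (w1 w2 : JV n k) : Set (JV n k → ℝ) :=
  {x | ∀ g : Equiv.Perm (Fin n), fixesW w1 w2 g → ∀ v, x (permAct g v) = x v}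

/-- The eigenvalues `φ_ℓ = (k−ℓ)(n−k−ℓ) − ℓ` of the Johnson graph `J(n,k)`. -/
noncomputable def jphi (n k : ℕ) (ℓ : Fin (k+1)) : ℝ :=
  ((k : ℝ) - (ℓ : ℕ)) * ((n : ℝ) - (k : ℝ) - (ℓ : ℕ)) - (ℓ : ℕ)

/-- `P` is the orthogonal projection onto the `μ`-eigenspace of the symmetric matrix `A`. -/
def IsOrthProj {V : Type*} [Fintype V] (A : Matrix V V ℝ) (μ : ℝ) (P : Matrix V V ℝ) : Prop :=
  Pᵀ = P ∧ P * P = P ∧ (∀ x, A.mulVec (P.mulVec x) = μ • P.mulVec x) ∧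
    (∀ x, A.mulVec x = μ • x → P.mulVec x = x)

/-- The sum `∑_{ℓ=1}^{k} (e_aᵀ P_ℓ e_b) / (φ_0 − φ_ℓ)^r`. -/
noncomputable def Ssum (n k : ℕ) (P : Fin (k+1) → Matrix (JV n k) (JV n k) ℝ)
    (a b : JV n k) (r : ℕ) : ℝ :=
  ∑ ℓ ∈ Finset.Ioi (0 : Fin (k+1)), P ℓ a b / (jphi n k 0 - jphi n k ℓ) ^ r
lemma JohnsonGraph_adj {n k : ℕ} (v w : JV n k) :
    (JohnsonGraph n k).Adj v w ↔ ((v.1 ∩ w.1).card = k - 1 ∧ v ≠ w) := Iff.rfl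

section Counting
open Finset
variable {n : ℕ}

/-- number of `j`-subsets of `c` (as elements of the subtype `JV n j`). -/
lemma count_sub (c : Finset (Fin n)) (j : ℕ) :
    (∑ s : JV n j, (if s.1 ⊆ c then (1:ℝ) else 0)) = ((c.card.choose j : ℕ) : ℝ) := by
  rw [Finset.sum_boole]
  norm_cast
  rw [← Finset.card_powersetCard j c]
  apply Finset.card_nbij (fun s => s.1)
  · intro a ha
    simp only [Finset.mem_coe, Finset.mem_filter] at ha
    simp [Finset.mem_powersetCard, ha.2, a.2]
  · intro a _ b _ hab
    exact Subtype.ext hab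
  · intro t ht
    simp only [Finset.mem_coe, Finset.mem_powersetCard] at ht
    exact ⟨⟨t, ht.2⟩, by simp [ht.1], rfl⟩

/-- number of `k`-subsets (as elements of `JV n k`) containing a fixed set `a` with `a.card ≤ k`. -/
lemma count_sup (a : Finset (Fin n)) (k : ℕ) (hak : a.card ≤ k) :
    (∑ v : JV n k, (if a ⊆ v.1 then (1:ℝ) else 0)) = (((n - a.card).choose (k - a.card) : ℕ) : ℝ) := by
  rw [Finset.sum_boole]
  norm_cast
  have hcc : aᶜ.card = n - a.card := by simp [Finset.card_compl]
  rw [← hcc, ← Finset.card_powersetCard (k - a.card) aᶜ]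
  apply Finset.card_nbij (fun v => v.1 \ a)
  · intro v hv
    simp only [Finset.mem_coe, Finset.mem_filter] at hv
    simp only [Finset.mem_coe, Finset.mem_powersetCard]
    constructor
    · intro x hx
      simp only [Finset.mem_sdiff] at hx
      simp [hx.2]
    · rw [Finset.card_sdiff_of_subset hv.2, v.2]
  · intro u hu v hv huv
    simp only [Finset.mem_coe, Finset.mem_filter] at hu hv
    apply Subtype.ext
    have : a ∪ (u.1 \ a) = a ∪ (v.1 \ a) := by simp only at huv; rw [huv]
    rwa [Finset.union_sdiff_of_subset hu.2, Finset.union_sdiff_of_subset hv.2] at this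
  · intro t ht
    simp only [Finset.mem_coe, Finset.mem_powersetCard] at ht
    have hdisj : Disjoint a t := by
      rw [Finset.disjoint_left]
      intro x hxa hxt
      have := ht.1 hxt
      simp [hxa] at this
    refine ⟨⟨a ∪ t, ?_⟩, by simp, ?_⟩
    · rw [Finset.card_union_of_disjoint hdisj, ht.2]
      omega
    · simp only
      exact Finset.union_sdiff_cancel_left hdisj

lemma count_sup_zero (a : Finset (Fin n)) (k : ℕ) (hak : k < a.card) :
    (∑ v : JV n k, (if a ⊆ v.1 then (1:ℝ) else 0)) = 0 := by
  apply Finset.sum_eq_zero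
  intro v _
  rw [if_neg]
  intro hsub
  have := Finset.card_le_card hsub
  rw [v.2] at this
  omega

end Counting
section Wmat
open Finset

/-- Inclusion matrix of `(j-1)`-subsets into `j`-subsets. -/
noncomputable def Wmat (n j : ℕ) : Matrix (JV n j) (JV n (j-1)) ℝ :=
  fun v s => if s.1 ⊆ v.1 then 1 else 0

lemma inter_card_lt {n j : ℕ} (u v : JV n j) (huv : u ≠ v) : (u.1 ∩ v.1).card < j := by
  have h1 : (u.1 ∩ v.1).card ≤ j := by
    have h0 := Finset.card_le_card (show u.1 ∩ v.1 ⊆ u.1 from Finset.inter_subset_left)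
    have h2 := u.2; omega
  rcases lt_or_eq_of_le h1 with h | h
  · exact h
  · exfalso
    have h2 : u.1 ∩ v.1 = u.1 :=
      Finset.eq_of_subset_of_card_le Finset.inter_subset_left (by rw [h, u.2])
    have h3 : u.1 ⊆ v.1 := by rw [← h2]; exact Finset.inter_subset_right
    exact huv (Subtype.ext (Finset.eq_of_subset_of_card_le h3 (by rw [u.2, v.2])))

lemma WWT (n j : ℕ) (hj : 1 ≤ j) :
    Wmat n j * (Wmat n j)ᵀ = JA n j + (j : ℝ) • 1 := by
  ext u v
  rw [Matrix.mul_apply]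
  have : ∀ s : JV n (j-1), Wmat n j u s * (Wmat n j)ᵀ s v
      = (if s.1 ⊆ u.1 ∩ v.1 then (1:ℝ) else 0) := by
    intro s
    simp only [Wmat, Matrix.transpose_apply, Finset.subset_inter_iff]
    by_cases h1 : s.1 ⊆ u.1 <;> by_cases h2 : s.1 ⊆ v.1 <;> simp [h1, h2]
  rw [Finset.sum_congr rfl (fun s _ => this s), count_sub]
  simp only [Matrix.add_apply, Matrix.smul_apply, Matrix.one_apply, JA,
    SimpleGraph.adjMatrix_apply, JohnsonGraph_adj, smul_eq_mul]
  by_cases huv : u = v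
  · subst huv
    simp only [Finset.inter_self, u.2, ne_eq, not_true_eq_false, and_false, if_false, if_true,
      mul_one, zero_add]
    have : j.choose (j-1) = j := by
      rw [Nat.choose_symm hj, Nat.choose_one_right]
    rw [this]
  · have hlt : (u.1 ∩ v.1).card < j := inter_card_lt u v huv
    simp only [huv, ne_eq, not_false_eq_true, and_true, if_false, mul_zero, add_zero]
    by_cases hc : (u.1 ∩ v.1).card = j - 1
    · rw [hc, if_pos rfl, Nat.choose_self]; norm_num
    · rw [if_neg hc, Nat.choose_eq_zero_of_lt (by omega)]; norm_num

lemma JA_zero (n : ℕ) : JA n 0 = 0 := by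
  ext u v
  simp only [JA, SimpleGraph.adjMatrix_apply, JohnsonGraph_adj, Matrix.zero_apply]
  rw [if_neg]
  rintro ⟨-, hne⟩
  exact hne (Subtype.ext (by rw [Finset.card_eq_zero.mp u.2, Finset.card_eq_zero.mp v.2]))

lemma dp_self_nonneg {V : Type*} [Fintype V] (x : V → ℝ) : 0 ≤ x ⬝ᵥ x :=
  Finset.sum_nonneg (fun i _ => mul_self_nonneg (x i))

lemma dmm {V U : Type*} [Fintype V] [Fintype U] (M : Matrix V U ℝ) (x : V → ℝ) (y : U → ℝ) :
    x ⬝ᵥ (M.mulVec y) = ((Mᵀ).mulVec x) ⬝ᵥ y := by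
  rw [Matrix.dotProduct_mulVec]
  congr 1
  rw [← Matrix.vecMul_transpose, Matrix.transpose_transpose]

lemma psd (n j : ℕ) (x : JV n j → ℝ) :
    -(j:ℝ) * (x ⬝ᵥ x) ≤ x ⬝ᵥ (JA n j).mulVec x := by
  rcases Nat.eq_zero_or_pos j with hj | hj
  · subst hj
    rw [JA_zero, Matrix.zero_mulVec, dotProduct_zero]
    simp
  · have key : x ⬝ᵥ (JA n j + (j:ℝ) • 1).mulVec x = ((Wmat n j)ᵀ.mulVec x) ⬝ᵥ ((Wmat n j)ᵀ.mulVec x) := by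
      rw [← WWT n j hj, ← Matrix.mulVec_mulVec, dmm]
    have h0 : 0 ≤ x ⬝ᵥ (JA n j + (j:ℝ) • 1).mulVec x := by
      rw [key]; exact dp_self_nonneg _
    rw [Matrix.add_mulVec, dotProduct_add, Matrix.smul_mulVec,
      Matrix.one_mulVec, dotProduct_smul, smul_eq_mul] at h0
    linarith

lemma WTW (n k : ℕ) (hk : 1 ≤ k) (hkn : k ≤ n) :
    (Wmat n k)ᵀ * Wmat n k = ((n:ℝ) - k + 1) • 1 + JA n (k-1) := by
  ext s t
  rw [Matrix.mul_apply]
  have : ∀ v : JV n k, (Wmat n k)ᵀ s v * Wmat n k v t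
      = (if s.1 ∪ t.1 ⊆ v.1 then (1:ℝ) else 0) := by
    intro v
    simp only [Wmat, Matrix.transpose_apply, Finset.union_subset_iff]
    by_cases h1 : s.1 ⊆ v.1 <;> by_cases h2 : t.1 ⊆ v.1 <;> simp [h1, h2]
  rw [Finset.sum_congr rfl (fun v _ => this v)]
  simp only [Matrix.add_apply, Matrix.smul_apply, Matrix.one_apply, JA,
    SimpleGraph.adjMatrix_apply, JohnsonGraph_adj, smul_eq_mul]
  by_cases hst : s = t
  · subst hst
    rw [Finset.union_self, count_sup _ _ (by rw [s.2]; omega)]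
    rw [s.2]
    have h1 : k - (k-1) = 1 := by omega
    rw [h1, Nat.choose_one_right]
    have : ((n - (k-1) : ℕ) : ℝ) = (n:ℝ) - k + 1 := by
      have : n - (k-1) = n - k + 1 := by omega
      rw [this]; push_cast [Nat.cast_sub hkn]; ring
    rw [this]
    simp
  · have hcard : s.1.card = k - 1 := s.2
    have hunion : k ≤ (s.1 ∪ t.1).card := by
      by_contra hlt
      push_neg at hlt
      have hsub : s.1 ⊆ s.1 ∪ t.1 := Finset.subset_union_left
      have : s.1 = s.1 ∪ t.1 := Finset.eq_of_subset_of_card_le hsub (by omega)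
      have htsub : t.1 ⊆ s.1 := by
        rw [this]; exact Finset.subset_union_right
      exact hst (Subtype.ext (Finset.eq_of_subset_of_card_le htsub (by rw [s.2, t.2])).symm)
    have hie := Finset.card_union_add_card_inter s.1 t.1
    rw [s.2, t.2] at hie
    simp only [hst, ne_eq, not_false_eq_true, and_true, if_false, mul_zero, zero_add]
    rcases Nat.eq_or_lt_of_le hunion with he | hl
    · rw [count_sup _ _ (by omega)]
      rw [← he, Nat.sub_self, Nat.choose_zero_right, if_pos (by omega)]
      norm_num
    · rw [count_sup_zero _ _ hl, if_neg (by omega)]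

end Wmat
section Proj
open Matrix

set_option linter.unusedSectionVars false
variable {V : Type*} [Fintype V] [DecidableEq V]

lemma JA_symm (n k : ℕ) : (JA n k)ᵀ = JA n k := by
  rw [JA]; exact SimpleGraph.transpose_adjMatrix _

lemma sym_dot {A : Matrix V V ℝ} (hA : Aᵀ = A) (x y : V → ℝ) :
    (A.mulVec x) ⬝ᵥ y = x ⬝ᵥ (A.mulVec y) := by
  rw [dmm, hA]

/-- eigenvectors for distinct eigenvalues of a symmetric matrix are orthogonal -/
lemma eig_orth {A : Matrix V V ℝ} (hA : Aᵀ = A) {μ ν : ℝ} (hμν : μ ≠ ν)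
    {x y : V → ℝ} (hx : A.mulVec x = μ • x) (hy : A.mulVec y = ν • y) :
    x ⬝ᵥ y = 0 := by
  have h1 : (A.mulVec x) ⬝ᵥ y = μ * (x ⬝ᵥ y) := by rw [hx, smul_dotProduct, smul_eq_mul]
  have h2 : x ⬝ᵥ (A.mulVec y) = ν * (x ⬝ᵥ y) := by rw [hy, dotProduct_smul, smul_eq_mul]
  have h3 := sym_dot hA x y
  rw [h1, h2] at h3
  rcases mul_eq_mul_right_iff.mp h3 with h | h
  · exact absurd h hμν
  · exact h

lemma proj_col_eig {A P : Matrix V V ℝ} {μ : ℝ} (hP : IsOrthProj A μ P) (x : V → ℝ) :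
    A.mulVec (P.mulVec x) = μ • (P.mulVec x) := hP.2.2.1 x

/-- matrix-level orthogonality of eigenprojections for distinct eigenvalues -/
lemma proj_orth {A P Q : Matrix V V ℝ} (hA : Aᵀ = A) {μ ν : ℝ} (hμν : μ ≠ ν)
    (hP : IsOrthProj A μ P) (hQ : IsOrthProj A ν Q) : P * Q = 0 := by
  ext i j
  rw [Matrix.mul_apply, Matrix.zero_apply]
  have h1 : ∀ x, P i x = (P.mulVec (Pi.single i 1)) x := by
    intro x
    rw [Matrix.mulVec_single_one, Matrix.col_apply]
    conv_lhs => rw [← hP.1]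
    rfl
  have h2 : ∀ x, Q x j = (Q.mulVec (Pi.single j 1)) x := by
    intro x
    rw [Matrix.mulVec_single_one, Matrix.col_apply]
  calc ∑ x, P i x * Q x j
      = (P.mulVec (Pi.single i 1)) ⬝ᵥ (Q.mulVec (Pi.single j 1)) := by
        apply Finset.sum_congr rfl; intro x _; rw [h1, h2]
    _ = 0 := eig_orth hA hμν (proj_col_eig hP _) (proj_col_eig hQ _)

lemma proj_diag_eq {A P : Matrix V V ℝ} {μ : ℝ} (hP : IsOrthProj A μ P) (v : V) :
    (P.mulVec (Pi.single v 1)) ⬝ᵥ (P.mulVec (Pi.single v 1)) = P v v := by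
  rw [dmm, Matrix.mulVec_mulVec, hP.1, hP.2.1, Matrix.mulVec_single]
  simp [single_dotProduct]

lemma proj_diag_nonneg {A P : Matrix V V ℝ} {μ : ℝ} (hP : IsOrthProj A μ P) (v : V) :
    0 ≤ P v v := by
  rw [← proj_diag_eq hP v]; exact dp_self_nonneg _

lemma dp_e_mulVec (M : Matrix V V ℝ) (v : V) (y : V → ℝ) :
    (Pi.single v (1:ℝ)) ⬝ᵥ (M.mulVec y) = (M.mulVec y) v := by
  rw [single_dotProduct, one_mul]

lemma CS_dp (x y : V → ℝ) : (x ⬝ᵥ y)^2 ≤ (x ⬝ᵥ x) * (y ⬝ᵥ y) := by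
  have := Finset.sum_mul_sq_le_sq_mul_sq Finset.univ x y
  simpa [dotProduct, sq] using this

end Proj
section Key
open Matrix

lemma keyLB (n k : ℕ) (hk : 1 ≤ k) (hn : 4*k + 4 ≤ n)
    (P : Matrix (JV n k) (JV n k) ℝ) (hP : IsOrthProj (JA n k) (-(k:ℝ)) P) (w : JV n k) :
    1 - (k:ℝ)/((n:ℝ) - 2*k + 2) ≤ P w w := by
  set W := Wmat n k with hW
  set A := JA n k with hA
  have hkn : k ≤ n := by omega
  have hD : (0:ℝ) < (n:ℝ) - 2*k + 2 := by
    have h1 : (4*k + 4 : ℝ) ≤ n := by exact_mod_cast hn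
    have h2 : (1:ℝ) ≤ k := by exact_mod_cast hk
    linarith
  set η := (k:ℝ)/((n:ℝ) - 2*k + 2) with hη
  -- the Gram matrix M = WᵀW is positive definite, hence injective, hence surjective
  set M := Wᵀ * W with hM
  have quadM : ∀ c, ((n:ℝ) - 2*k + 2) * (c ⬝ᵥ c) ≤ c ⬝ᵥ M.mulVec c := by
    intro c
    have h1 : c ⬝ᵥ M.mulVec c = ((n:ℝ) - k + 1) * (c ⬝ᵥ c) + c ⬝ᵥ (JA n (k-1)).mulVec c := by
      rw [hM, WTW n k hk hkn, Matrix.add_mulVec, dotProduct_add,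
        Matrix.smul_mulVec, Matrix.one_mulVec, dotProduct_smul, smul_eq_mul]
    have h2 := psd n (k-1) c
    have h3 : ((k-1 : ℕ) : ℝ) = (k:ℝ) - 1 := by push_cast [Nat.cast_sub hk]; ring
    rw [h3] at h2
    linarith
  have hMinj : Function.Injective (M.mulVecLin) := by
    rw [← LinearMap.ker_eq_bot]
    rw [LinearMap.ker_eq_bot']
    intro c hc
    have h0 : c ⬝ᵥ M.mulVec c = 0 := by
      rw [show M.mulVec c = 0 from hc, dotProduct_zero]
    have h1 := quadM c
    rw [h0] at h1
    have h2 : c ⬝ᵥ c ≤ 0 := by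
      by_contra hpos
      push_neg at hpos
      nlinarith
    have h3 : c ⬝ᵥ c = 0 := le_antisymm h2 (dp_self_nonneg c)
    funext v
    have h4 : ∀ u ∈ Finset.univ, (0:ℝ) ≤ c u * c u := fun u _ => mul_self_nonneg _
    have h5 := (Finset.sum_eq_zero_iff_of_nonneg h4).mp h3 v (Finset.mem_univ v)
    simpa using mul_self_eq_zero.mp h5
  have hMsurj : Function.Surjective (M.mulVecLin) :=
    LinearMap.injective_iff_surjective.mp hMinj
  set e : JV n k → ℝ := Pi.single w 1 with he
  obtain ⟨c, hc⟩ := hMsurj (Wᵀ.mulVec e)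
  rw [Matrix.mulVecLin_apply] at hc
  set y : JV n k → ℝ := e - W.mulVec c with hy
  have hWty : Wᵀ.mulVec y = 0 := by
    rw [hy, Matrix.mulVec_sub, Matrix.mulVec_mulVec, ← hM, hc, sub_self]
  -- y is a (-k)-eigenvector
  have hAy : A.mulVec y = (-(k:ℝ)) • y := by
    have h1 : (W * Wᵀ).mulVec y = 0 := by
      rw [← Matrix.mulVec_mulVec, hWty, Matrix.mulVec_zero]
    rw [hW, WWT n k hk] at h1
    rw [Matrix.add_mulVec, Matrix.smul_mulVec, Matrix.one_mulVec] at h1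
    have : A.mulVec y = -((k:ℝ) • y) := by
      rw [← hA] at h1
      linear_combination (norm := module) h1
    rw [this, neg_smul]
  have hPy : P.mulVec y = y := hP.2.2.2 y hAy
  -- the projection weight β
  set β := (W.mulVec c) ⬝ᵥ (W.mulVec c) with hβ
  have hβ0 : 0 ≤ β := dp_self_nonneg _
  have horth : (W.mulVec c) ⬝ᵥ y = 0 := by
    rw [dotProduct_comm, dmm, hWty, zero_dotProduct]
  have hewc : e ⬝ᵥ (W.mulVec c) = β := by
    have : e = y + W.mulVec c := by rw [hy]; abel
    rw [this, add_dotProduct, hβ]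
    rw [dotProduct_comm (W.mulVec c) y] at horth
    rw [horth, zero_add]
  -- β ≤ η
  have hβη : β ≤ η := by
    have h1 : β = (Wᵀ.mulVec e) ⬝ᵥ c := by rw [← hewc, dmm]
    have h2 : (Wᵀ.mulVec e) ⬝ᵥ (Wᵀ.mulVec e) = (k:ℝ) := by
      rw [dmm, Matrix.transpose_transpose, Matrix.mulVec_mulVec, hW, WWT n k hk]
      rw [Matrix.add_mulVec, Matrix.smul_mulVec, Matrix.one_mulVec,
        add_dotProduct, smul_dotProduct]
      have hee : e ⬝ᵥ e = 1 := by
        rw [he, single_dotProduct, one_mul, Pi.single_eq_same]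
      have hAww : (JA n k).mulVec e ⬝ᵥ e = 0 := by
        rw [dotProduct_comm, he]
        simp [single_dotProduct, Matrix.mulVec_single, JA]
      rw [hAww, hee, smul_eq_mul, mul_one, zero_add]
    have hCS : β^2 ≤ (k:ℝ) * (c ⬝ᵥ c) := by
      have := CS_dp (Wᵀ.mulVec e) c
      rw [← h1, h2] at this
      exact this
    have hquad : ((n:ℝ) - 2*k + 2) * (c ⬝ᵥ c) ≤ β := by
      have h3 := quadM c
      have h4 : c ⬝ᵥ M.mulVec c = β := by
        rw [hM, ← Matrix.mulVec_mulVec, dmm, Matrix.transpose_transpose]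
      rw [h4] at h3
      exact h3
    rcases eq_or_lt_of_le hβ0 with h | h
    · rw [← h, hη]; positivity
    · have hcc : 0 ≤ c ⬝ᵥ c := dp_self_nonneg c
      rw [hη, le_div_iff₀ hD]
      nlinarith
  -- final Cauchy-Schwarz step
  have hee : e ⬝ᵥ e = 1 := by
    rw [he, single_dotProduct, one_mul, Pi.single_eq_same]
  have hey : e ⬝ᵥ y = 1 - β := by
    rw [hy, dotProduct_sub, hee, hewc]
  have hyy : y ⬝ᵥ y = 1 - β := by
    have h6 : y ⬝ᵥ y = (e - W.mulVec c) ⬝ᵥ y := by rw [← hy]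
    rw [h6, sub_dotProduct, horth, hey, sub_zero]
  have hpy : (P.mulVec e) ⬝ᵥ y = 1 - β := by
    rw [sym_dot hP.1 e y, hPy, hey]
  have hpp : (P.mulVec e) ⬝ᵥ (P.mulVec e) = P w w := by
    rw [he]; exact proj_diag_eq hP w
  have hCS2 : (1 - β)^2 ≤ P w w * (1 - β) := by
    have := CS_dp (P.mulVec e) y
    rw [hpy, hpp, hyy] at this
    exact this
  have hPww : 0 ≤ P w w := by rw [he] at hpp; exact proj_diag_nonneg hP w
  rcases le_or_gt (1 - β) 0 with h | h
  · linarith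
  · nlinarith

end Key
section Glue
open Matrix

variable {V : Type*} [Fintype V] [DecidableEq V]
set_option linter.unusedSectionVars false

lemma proj_entry_eq' {A P : Matrix V V ℝ} {μ : ℝ} (hP : IsOrthProj A μ P) (u v : V) :
    ((P.mulVec (Pi.single u 1)) ⬝ᵥ (P.mulVec (Pi.single v 1))) = P u v := by
  rw [dmm, Matrix.mulVec_mulVec, hP.1, hP.2.1, Matrix.mulVec_single]
  have h := congrFun (congrFun hP.1 v) u
  simp only [Matrix.transpose_apply] at h
  simp [dotProduct_single, h]

lemma jphi_inj (n k : ℕ) (hn : 2*k ≤ n) (ℓ m : Fin (k+1)) (hne : ℓ ≠ m) :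
    jphi n k ℓ ≠ jphi n k m := by
  intro heq
  have hl : (ℓ:ℕ) ≤ k := Nat.lt_succ_iff.mp ℓ.isLt
  have hm : (m:ℕ) ≤ k := Nat.lt_succ_iff.mp m.isLt
  have hl' : ((ℓ:ℕ):ℝ) ≤ (k:ℝ) := by exact_mod_cast hl
  have hm' : ((m:ℕ):ℝ) ≤ (k:ℝ) := by exact_mod_cast hm
  have hn' : 2*(k:ℝ) ≤ (n:ℝ) := by exact_mod_cast hn
  simp only [jphi] at heq
  have hfac : (((ℓ:ℕ):ℝ) - ((m:ℕ):ℝ)) * (((ℓ:ℕ):ℝ) + ((m:ℕ):ℝ) - (n:ℝ) - 1) = 0 := by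
    linear_combination heq
  have h2 : ((ℓ:ℕ):ℝ) + ((m:ℕ):ℝ) - (n:ℝ) - 1 < 0 := by linarith
  have h3 : ((ℓ:ℕ):ℝ) = ((m:ℕ):ℝ) := by
    rcases mul_eq_zero.mp hfac with h | h
    · linarith
    · linarith
  exact hne (Fin.ext (by exact_mod_cast h3))

lemma sum_diag_le_one (n k : ℕ) (hk : 1 ≤ k) (hn : 2*k ≤ n)
    (P : Fin (k+1) → Matrix (JV n k) (JV n k) ℝ)
    (hP : ∀ ℓ, IsOrthProj (JA n k) (jphi n k ℓ) (P ℓ)) (v : JV n k) :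
    ∑ ℓ, P ℓ v v ≤ 1 := by
  classical
  set Q : Matrix (JV n k) (JV n k) ℝ := ∑ ℓ, P ℓ with hQ
  have hQt : Qᵀ = Q := by
    rw [hQ, Matrix.transpose_sum]
    exact Finset.sum_congr rfl (fun ℓ _ => (hP ℓ).1)
  have hQQ : Q * Q = Q := by
    rw [hQ, Finset.sum_mul_sum]
    rw [Finset.sum_congr rfl (fun ℓ (_ : ℓ ∈ Finset.univ) =>
      (Finset.sum_eq_single_of_mem ℓ (Finset.mem_univ ℓ)
        (fun m _ hm => proj_orth (JA_symm n k) (jphi_inj n k hn ℓ m (Ne.symm hm)) (hP ℓ) (hP m))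
        : ∑ m, P ℓ * P m = P ℓ * P ℓ))]
    exact Finset.sum_congr rfl (fun ℓ _ => (hP ℓ).2.1)
  set e : JV n k → ℝ := Pi.single v 1 with he
  have h1 : (Q.mulVec e) ⬝ᵥ (Q.mulVec e) = Q v v := by
    rw [he, dmm, Matrix.mulVec_mulVec, hQt, hQQ, Matrix.mulVec_single]
    simp [dotProduct_single]
  have h2 : e ⬝ᵥ (Q.mulVec e) = Q v v := by
    rw [he, single_dotProduct, one_mul, Matrix.mulVec_single]
    simp
  have h3 : e ⬝ᵥ e = 1 := by rw [he, single_dotProduct, one_mul, Pi.single_eq_same]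
  have hCS := CS_dp e (Q.mulVec e)
  rw [h1, h2, h3, one_mul] at hCS
  have h4 : ∑ ℓ, P ℓ v v = Q v v := by rw [hQ, Matrix.sum_apply]
  have h5 : 0 ≤ Q v v := by
    rw [← h4]
    exact Finset.sum_nonneg (fun ℓ _ => proj_diag_nonneg (hP ℓ) v)
  rw [h4]
  nlinarith

lemma offdiag_bound {A P : Matrix V V ℝ} {μ : ℝ} (hP : IsOrthProj A μ P) (u v : V) :
    |P u v| ≤ (P u u + P v v)/2 := by
  have h1 := proj_entry_eq' hP u v
  have hCS := CS_dp (P.mulVec (Pi.single u 1)) (P.mulVec (Pi.single v 1))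
  rw [h1, proj_diag_eq hP u, proj_diag_eq hP v] at hCS
  have hu := proj_diag_nonneg hP u
  have hv := proj_diag_nonneg hP v
  rw [abs_le]
  constructor <;> nlinarith [sq_nonneg (P u u - P v v)]

end Glue
section Glue2
open Matrix
variable {V : Type*} [Fintype V] [DecidableEq V]
set_option linter.unusedSectionVars false

lemma abs_dp_le {x y : V → ℝ} {a b : ℝ} (hx : x ⬝ᵥ x ≤ a) (hy : y ⬝ᵥ y ≤ b)
    (ha : 0 ≤ a) (hb : 0 ≤ b) : |x ⬝ᵥ y| ≤ Real.sqrt a * Real.sqrt b := by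
  have hCS := CS_dp x y
  have h1 : (x ⬝ᵥ y)^2 ≤ a * b := le_trans hCS
    (mul_le_mul hx hy (dp_self_nonneg y) ha)
  have h2 : Real.sqrt a * Real.sqrt b = Real.sqrt (a*b) := (Real.sqrt_mul ha b).symm
  rw [h2]
  exact Real.abs_le_sqrt h1

lemma offdiag_near {A P : Matrix V V ℝ} {μ : ℝ} (hP : IsOrthProj A μ P) {u v : V}
    (huv : u ≠ v) {η : ℝ} (hη : 0 ≤ η)
    (hu : 1 - η ≤ P u u) (hv : 1 - η ≤ P v v) (hu1 : P u u ≤ 1) (hv1 : P v v ≤ 1) :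
    |P u v| ≤ 2*Real.sqrt η + η := by
  set eu : V → ℝ := Pi.single u 1 with heu
  set ev : V → ℝ := Pi.single v 1 with hev
  set ru : V → ℝ := P.mulVec eu - eu with hru
  set rv : V → ℝ := P.mulVec ev - ev with hrv
  have heue : eu ⬝ᵥ eu = 1 := by rw [heu, single_dotProduct, one_mul, Pi.single_eq_same]
  have heve : ev ⬝ᵥ ev = 1 := by rw [hev, single_dotProduct, one_mul, Pi.single_eq_same]
  have hpu : (P.mulVec eu) ⬝ᵥ (P.mulVec eu) = P u u := by rw [heu]; exact proj_diag_eq hP u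
  have hpv : (P.mulVec ev) ⬝ᵥ (P.mulVec ev) = P v v := by rw [hev]; exact proj_diag_eq hP v
  have hpue : eu ⬝ᵥ (P.mulVec eu) = P u u := by
    rw [heu, single_dotProduct, one_mul, Matrix.mulVec_single]
    simp
  have hpve : ev ⬝ᵥ (P.mulVec ev) = P v v := by
    rw [hev, single_dotProduct, one_mul, Matrix.mulVec_single]
    simp
  have hrur : ru ⬝ᵥ ru ≤ η := by
    have h : ru ⬝ᵥ ru = 1 - P u u := by
      rw [hru, sub_dotProduct, dotProduct_sub, dotProduct_sub,
        hpu, heue, dotProduct_comm (P.mulVec eu) eu, hpue]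
      ring
    linarith
  have hrvr : rv ⬝ᵥ rv ≤ η := by
    have h : rv ⬝ᵥ rv = 1 - P v v := by
      rw [hrv, sub_dotProduct, dotProduct_sub, dotProduct_sub,
        hpv, heve, dotProduct_comm (P.mulVec ev) ev, hpve]
      ring
    linarith
  have hexp : P u v = eu ⬝ᵥ ev + eu ⬝ᵥ rv + ru ⬝ᵥ ev + ru ⬝ᵥ rv := by
    have h1 : P.mulVec eu = eu + ru := by rw [hru]; abel
    have h2 : P.mulVec ev = ev + rv := by rw [hrv]; abel
    have h3 := proj_entry_eq' hP u v
    rw [← heu, ← hev, h1, h2] at h3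
    rw [← h3, add_dotProduct, dotProduct_add, dotProduct_add]
    ring
  have h0 : eu ⬝ᵥ ev = 0 := by
    rw [heu, single_dotProduct, one_mul, hev, Pi.single_eq_of_ne huv]
  have hb1 : |eu ⬝ᵥ rv| ≤ Real.sqrt η := by
    have := abs_dp_le (le_of_eq heue) hrvr zero_le_one hη
    simpa using this
  have hb2 : |ru ⬝ᵥ ev| ≤ Real.sqrt η := by
    have := abs_dp_le hrur (le_of_eq heve) hη zero_le_one
    simpa using this
  have hb3 : |ru ⬝ᵥ rv| ≤ η := by
    have := abs_dp_le hrur hrvr hη hη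
    rwa [Real.mul_self_sqrt hη] at this
  calc |P u v| = |eu ⬝ᵥ ev + eu ⬝ᵥ rv + ru ⬝ᵥ ev + ru ⬝ᵥ rv| := by rw [hexp]
    _ ≤ |eu ⬝ᵥ ev + eu ⬝ᵥ rv + ru ⬝ᵥ ev| + |ru ⬝ᵥ rv| := abs_add_le _ _
    _ ≤ (|eu ⬝ᵥ ev + eu ⬝ᵥ rv| + |ru ⬝ᵥ ev|) + |ru ⬝ᵥ rv| := by
        gcongr; exact abs_add_le _ _
    _ ≤ ((|eu ⬝ᵥ ev| + |eu ⬝ᵥ rv|) + |ru ⬝ᵥ ev|) + |ru ⬝ᵥ rv| := by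
        gcongr; exact abs_add_le _ _
    _ ≤ ((0 + Real.sqrt η) + Real.sqrt η) + η := by
        rw [h0, abs_zero]
        gcongr
    _ = 2*Real.sqrt η + η := by ring

end Glue2
section Numeric

lemma gapLB (lv kv N : ℝ) (h1 : 1 ≤ lv) (h2 : lv ≤ kv) (h3 : 4*kv + 4 ≤ N) :
    N + 1 - kv ≤ lv*(N + 1 - lv) := by
  nlinarith [mul_nonneg (sub_nonneg.mpr h1) (show (0:ℝ) ≤ N + 1 - lv by nlinarith)]

lemma etaRho (kk N : ℝ) (hk1 : 1 ≤ kk) (hN4 : 4*kk + 4 ≤ N) :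
    kk/(N - 2*kk + 2) ≤ 2*kk/N := by
  have h1 : (0:ℝ) < N - 2*kk + 2 := by linarith
  have h2 : (0:ℝ) < N := by linarith
  rw [div_le_div_iff₀ h1 h2]
  nlinarith

lemma rhoUB (kk N : ℝ) (hk1 : 1 ≤ kk) (hN4 : 4*kk + 4 ≤ N) :
    N/(N + 1 - kk) ≤ 1 + 2*kk/N := by
  have hu0 : (0:ℝ) < N + 1 - kk := by linarith
  have hN0 : (0:ℝ) < N := by linarith
  have he : 1 + 2*kk/N = (N + 2*kk)/N := by field_simp
  rw [he, div_le_div_iff₀ hu0 hN0]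
  nlinarith

lemma step1a (η r X : ℝ) (h : (1-η)*r ≤ X) (hη1 : η ≤ 1) (hr1 : 1 ≤ r) : 1 - η ≤ X := by
  nlinarith

lemma step1b (kk η ρ r X : ℝ) (h : X ≤ r + kk*η*r) (hr2 : r ≤ 2) (hrρ : r ≤ 1+ρ)
    (hη0 : 0 < η) (hηρ : η ≤ ρ) (hρ0 : 0 < ρ) (hk1 : 1 ≤ kk) : X ≤ 1 + 3*kk*ρ := by
  have t1 : kk*η*r ≤ kk*η*2 := by
    have := mul_le_mul_of_nonneg_left hr2 (by nlinarith : (0:ℝ) ≤ kk*η)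
    nlinarith [this]
  have t2 : kk*η ≤ kk*ρ := by nlinarith
  have t3 : ρ ≤ kk*ρ := by nlinarith
  linarith

lemma step2a (η r Y : ℝ) (h : (1-η)*r^2 ≤ Y) (hη1 : η ≤ 1) (hr1 : 1 ≤ r) : 1 - η ≤ Y := by
  nlinarith [mul_nonneg (by linarith : (0:ℝ) ≤ 1-η) (by nlinarith : (0:ℝ) ≤ r^2 - 1)]

lemma step2b (kk η ρ r Y : ℝ) (h : Y ≤ r^2 + kk^2*η*r^2) (hr1 : 1 ≤ r) (hr2 : r ≤ 2)
    (hrρ : r ≤ 1+ρ) (hρ0 : 0 < ρ) (hρ1 : ρ ≤ 1) (hη0 : 0 < η) (hηρ : η ≤ ρ)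
    (hk1 : 1 ≤ kk) : Y ≤ 1 + 7*kk^2*ρ := by
  have hk0 : (0:ℝ) < kk := by linarith
  have hrsq : r^2 ≤ 1 + 3*ρ := by nlinarith
  have t1 : kk^2*η*r^2 ≤ kk^2*η*4 := by
    have h4 : r^2 ≤ 4 := by nlinarith
    have := mul_le_mul_of_nonneg_left h4 (by positivity : (0:ℝ) ≤ kk^2*η)
    nlinarith [this]
  have t2 : kk^2*η ≤ kk^2*ρ := by nlinarith [sq_nonneg kk]
  have t3 : 3*ρ ≤ 3*kk^2*ρ := by
    nlinarith [mul_nonneg (by nlinarith : (0:ℝ) ≤ kk^2 - 1) hρ0.le]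
  linarith

lemma step3 (kk η r Z s : ℝ) (h : |Z| ≤ (2*s+η)*r + kk*η*r) (hr1 : 1 ≤ r) (hr2 : r ≤ 2)
    (hη0 : 0 < η) (hs : 0 ≤ s) (hk1 : 1 ≤ kk) :
    |Z| ≤ 4*s + 2*η + 2*kk*η := by
  have t1 : (2*s+η)*r ≤ (2*s+η)*2 :=
    mul_le_mul_of_nonneg_left hr2 (by linarith)
  have t2 : kk*η*r ≤ kk*η*2 := by
    have := mul_le_mul_of_nonneg_left hr2 (by nlinarith : (0:ℝ) ≤ kk*η)
    nlinarith [this]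
  nlinarith

set_option maxHeartbeats 1000000 in
lemma final_numeric (kk N ε η X Y Z : ℝ)
    (hk1 : 1 ≤ kk) (hN0 : 0 < N) (hε : 0 < ε)
    (hεN : 512*kk^3 ≤ ε * N) (hε2N : 512*kk^3 ≤ ε^2 * N)
    (hη0 : 0 < η) (hηρ : η ≤ 2*kk/N)
    (hg1a : 1 - η ≤ X) (hg1b : X ≤ 1 + 3*kk*(2*kk/N))
    (hg2a : 1 - η ≤ Y) (hg2b : Y ≤ 1 + 7*kk^2*(2*kk/N))
    (hg3 : |Z| ≤ 4*Real.sqrt η + 2*η + 2*kk*η) :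
    |X - 1| < ε ∧ |Y - 1| < ε ∧ |X + Z - 1| < ε := by
  have hk0 : (0:ℝ) < kk := by linarith
  have hq0 : (0:ℝ) < 2*kk/N := by positivity
  have hmono2 : kk^2 ≤ kk^3 := by nlinarith
  have hmono1 : kk ≤ kk^3 := by nlinarith
  have hcap1 : 3*kk*(2*kk/N) < ε/4 := by
    rw [show 3*kk*(2*kk/N) = 6*kk^2/N from by ring, div_lt_iff₀ hN0]
    nlinarith
  have hcap2 : 7*kk^2*(2*kk/N) < ε := by
    rw [show 7*kk^2*(2*kk/N) = 14*kk^3/N from by ring, div_lt_iff₀ hN0]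
    nlinarith
  have hηε : η < ε/4 := by
    have h2 : 2*kk/N < ε/4 := by
      rw [div_lt_iff₀ hN0]
      nlinarith
    linarith
  have hsqη : Real.sqrt η ≤ ε/16 := by
    have h1 : η ≤ (ε/16)^2 := by
      have h2 : 2*kk/N ≤ ε^2/256 := by
        rw [div_le_div_iff₀ hN0 (by norm_num : (0:ℝ) < 256)]
        nlinarith
      nlinarith
    calc Real.sqrt η ≤ Real.sqrt ((ε/16)^2) := Real.sqrt_le_sqrt h1
      _ = ε/16 := Real.sqrt_sq (by positivity)
  have hsq0 : 0 ≤ Real.sqrt η := Real.sqrt_nonneg η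
  refine ⟨?_, ?_, ?_⟩
  · rw [abs_lt]
    exact ⟨by linarith, by linarith⟩
  · rw [abs_lt]
    exact ⟨by linarith, by linarith⟩
  · have h1 : |X + Z - 1| ≤ |X - 1| + |Z| := by
      have he : X + Z - 1 = (X - 1) + Z := by ring
      rw [he]
      exact abs_add_le _ _
    have hq1 : (0:ℝ) < 3*kk*(2*kk/N) := by positivity
    have h2 : |X - 1| ≤ η + 3*kk*(2*kk/N) := by
      rw [abs_le]
      refine ⟨by linarith, by linarith⟩
    have t2 : kk*η ≤ kk*(2*kk/N) := mul_le_mul_of_nonneg_left hηρ hk0.le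
    have t3 : 2*kk/N ≤ kk*(2*kk/N) := by
      nlinarith [mul_nonneg (sub_nonneg.mpr hk1) hq0.le]
    have hb : 8*(kk*(2*kk/N)) < ε/2 := by
      rw [show 8*(kk*(2*kk/N)) = 16*kk^2/N from by ring, div_lt_iff₀ hN0]
      nlinarith
    linarith

end Numeric
set_option maxHeartbeats 1600000 in
theorem stmt15 (k δ : ℕ) (hk : 1 ≤ k) (hδ1 : 1 ≤ δ) (hδk : δ ≤ k) :
    ∀ ε : ℝ, 0 < ε → ∃ n0 : ℕ, ∀ n : ℕ, n0 ≤ n →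
      ∀ w1 w2 : JV n k, (w1.1 ∩ w2.1).card = k - δ →
        ∀ P : Fin (k+1) → Matrix (JV n k) (JV n k) ℝ,
          (∀ ℓ, IsOrthProj (JA n k) (jphi n k ℓ) (P ℓ)) →
          |(k : ℝ) * (n : ℝ) * Ssum n k P w1 w1 1 - 1| < ε ∧
            |(k : ℝ) ^ 2 * (n : ℝ) ^ 2 * Ssum n k P w1 w1 2 - 1| < ε ∧
            |(k : ℝ) * (n : ℝ) * (Ssum n k P w1 w1 1 + Ssum n k P w1 w2 1) - 1| < ε := by
  intro ε hε
  set C : ℝ := 512*(k:ℝ)^3*(1/ε + 1/ε^2) with hC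
  refine ⟨⌈C⌉₊ + 4*k + 5, ?_⟩
  intro n hn w1 w2 hw P hP
  -- ======== numeric setup ========
  set N : ℝ := (n:ℝ) with hN
  have hk0 : (0:ℝ) < (k:ℝ) := by exact_mod_cast hk
  have hk1 : (1:ℝ) ≤ (k:ℝ) := by exact_mod_cast hk
  have hn4 : 4*k + 4 ≤ n := by omega
  have hn2 : 2*k ≤ n := by omega
  have hN4 : 4*(k:ℝ) + 4 ≤ N := by rw [hN]; exact_mod_cast hn4
  have hN0 : (0:ℝ) < N := by linarith
  have hkN : (k:ℝ) ≤ N := by linarith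
  have hCN : C ≤ N := by
    have h1 : (⌈C⌉₊ : ℝ) ≤ (n:ℝ) := by
      have : ⌈C⌉₊ ≤ n := by omega
      exact_mod_cast this
    exact le_trans (Nat.le_ceil C) h1
  have hCsplit : C = 512*(k:ℝ)^3*(1/ε) + 512*(k:ℝ)^3*(1/ε^2) := by rw [hC]; ring
  have hεN : 512*(k:ℝ)^3 ≤ ε * N := by
    have h2 : 512*(k:ℝ)^3*(1/ε) ≤ C := by
      rw [hCsplit]
      have h3 : (0:ℝ) ≤ 512*(k:ℝ)^3*(1/ε^2) := by positivity
      linarith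
    have h3 : 512*(k:ℝ)^3*(1/ε) ≤ N := le_trans h2 hCN
    have h4 : ε * (512*(k:ℝ)^3*(1/ε)) = 512*(k:ℝ)^3 := by field_simp
    have h5 := mul_le_mul_of_nonneg_left h3 hε.le
    rw [h4] at h5
    exact h5
  have hε2N : 512*(k:ℝ)^3 ≤ ε^2 * N := by
    have h2 : 512*(k:ℝ)^3*(1/ε^2) ≤ C := by
      rw [hCsplit]
      have h3 : (0:ℝ) ≤ 512*(k:ℝ)^3*(1/ε) := by positivity
      linarith
    have h3 : 512*(k:ℝ)^3*(1/ε^2) ≤ N := le_trans h2 hCN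
    have h4 : ε^2 * (512*(k:ℝ)^3*(1/ε^2)) = 512*(k:ℝ)^3 := by field_simp
    have h5 := mul_le_mul_of_nonneg_left h3 (by positivity : (0:ℝ) ≤ ε^2)
    rw [h4] at h5
    exact h5
  -- ======== eigenvalue gaps ========
  have hD : ∀ ℓ : Fin (k+1), jphi n k 0 - jphi n k ℓ = ((ℓ:ℕ):ℝ) * (N + 1 - ((ℓ:ℕ):ℝ)) := by
    intro ℓ
    simp only [jphi, Fin.val_zero, Nat.cast_zero, hN]
    ring
  set u : ℝ := N + 1 - (k:ℝ) with hu
  have hu0 : (0:ℝ) < u := by rw [hu]; linarith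
  have hu2 : N ≤ 2*u := by rw [hu]; linarith
  have huN : u ≤ N := by rw [hu]; linarith
  set T := Finset.Ioi (0 : Fin (k+1)) with hT
  have hmemT : ∀ ℓ ∈ T, 1 ≤ ((ℓ:ℕ):ℝ) ∧ ((ℓ:ℕ):ℝ) ≤ (k:ℝ) := by
    intro ℓ hℓ
    have h1 : (0 : Fin (k+1)) < ℓ := Finset.mem_Ioi.mp hℓ
    have h2 : 0 < (ℓ:ℕ) := by rwa [Fin.lt_def, Fin.val_zero] at h1
    have h3 : (ℓ:ℕ) ≤ k := Nat.lt_succ_iff.mp ℓ.isLt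
    exact ⟨by exact_mod_cast h2, by exact_mod_cast h3⟩
  have hDge : ∀ ℓ ∈ T, u ≤ jphi n k 0 - jphi n k ℓ := by
    intro ℓ hℓ
    obtain ⟨h1, h2⟩ := hmemT ℓ hℓ
    rw [hD ℓ, hu]
    exact gapLB _ _ _ h1 h2 hN4
  have hDpos : ∀ ℓ ∈ T, 0 < jphi n k 0 - jphi n k ℓ :=
    fun ℓ hℓ => lt_of_lt_of_le hu0 (hDge ℓ hℓ)
  set L : Fin (k+1) := Fin.last k with hL
  have hLT : L ∈ T := by
    rw [hT, Finset.mem_Ioi, hL, Fin.lt_def]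
    simpa using (show 0 < k by omega)
  have hDL : jphi n k 0 - jphi n k L = (k:ℝ) * u := by
    rw [hD L, hL, Fin.val_last, hu]
  have hjL : jphi n k L = -(k:ℝ) := by
    simp only [jphi, hL, Fin.val_last]
    ring
  -- ======== η and ρ ========
  set η : ℝ := (k:ℝ)/(N - 2*(k:ℝ) + 2) with hη
  have hd2 : (0:ℝ) < N - 2*(k:ℝ) + 2 := by linarith
  have hη0 : 0 < η := by rw [hη]; positivity
  have hρ0 : (0:ℝ) < 2*(k:ℝ)/N := by positivity
  have hηρ : η ≤ 2*(k:ℝ)/N := by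
    rw [hη]
    exact etaRho (k:ℝ) N hk1 hN4
  have hρ1 : 2*(k:ℝ)/N ≤ 1 := by
    rw [div_le_one hN0]; linarith
  have hη1 : η ≤ 1 := le_trans hηρ hρ1
  -- ======== projection facts ========
  have hPd : ∀ ℓ (v : JV n k), 0 ≤ P ℓ v v := fun ℓ v => proj_diag_nonneg (hP ℓ) v
  have hS1d : ∀ v : JV n k, ∑ ℓ, P ℓ v v ≤ 1 := sum_diag_le_one n k hk hn2 P hP
  have hd1 : ∀ ℓ (v : JV n k), P ℓ v v ≤ 1 := by
    intro ℓ v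
    have h1 := Finset.single_le_sum (f := fun m => P m v v) (fun m _ => hPd m v)
      (Finset.mem_univ ℓ)
    linarith [hS1d v]
  have hPL : IsOrthProj (JA n k) (-(k:ℝ)) (P L) := by rw [← hjL]; exact hP L
  have hLB : ∀ v : JV n k, 1 - η ≤ P L v v := fun v => keyLB n k hk hn4 (P L) hPL v
  have hTd : ∀ v : JV n k, ∑ ℓ ∈ T, P ℓ v v ≤ 1 := by
    intro v
    have h1 : ∑ ℓ ∈ T, P ℓ v v ≤ ∑ ℓ, P ℓ v v :=
      Finset.sum_le_sum_of_subset_of_nonneg (Finset.subset_univ T) (fun m _ _ => hPd m v)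
    linarith [hS1d v]
  have hrest : ∀ v : JV n k, ∑ ℓ ∈ T.erase L, P ℓ v v ≤ η := by
    intro v
    have h1 := Finset.add_sum_erase T (fun ℓ => P ℓ v v) hLT
    have h2 := hTd v
    have h3 := hLB v
    linarith
  have hwne : w1 ≠ w2 := by
    intro hcontra
    rw [hcontra, Finset.inter_self, w2.2] at hw
    omega
  have hgL : |P L w1 w2| ≤ 2*Real.sqrt η + η :=
    offdiag_near hPL hwne hη0.le (hLB w1) (hLB w2) (hd1 L w1) (hd1 L w2)
  have hgod : ∀ ℓ, |P ℓ w1 w2| ≤ (P ℓ w1 w1 + P ℓ w2 w2)/2 :=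
    fun ℓ => offdiag_bound (hP ℓ) w1 w2
  -- ======== S1 bounds ========
  have hsplit : ∀ (f : Fin (k+1) → ℝ), ∑ ℓ ∈ T, f ℓ = f L + ∑ ℓ ∈ T.erase L, f ℓ :=
    fun f => (Finset.add_sum_erase T f hLT).symm
  have hku : (0:ℝ) < (k:ℝ)*u := by positivity
  have htermpos : ∀ (v : JV n k) (r : ℕ), ∀ ℓ ∈ T,
      0 ≤ P ℓ v v / (jphi n k 0 - jphi n k ℓ)^r := by
    intro v r ℓ hℓ
    exact div_nonneg (hPd ℓ v) (pow_nonneg (hDpos ℓ hℓ).le r)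
  have hS1low : (1-η)/((k:ℝ)*u) ≤ Ssum n k P w1 w1 1 := by
    rw [Ssum]
    have hterm : (1-η)/((k:ℝ)*u) ≤ P L w1 w1 / (jphi n k 0 - jphi n k L)^1 := by
      rw [pow_one, hDL]
      gcongr
      exact hLB w1
    exact le_trans hterm (Finset.single_le_sum (htermpos w1 1) hLT)
  have hS1high : Ssum n k P w1 w1 1 ≤ 1/((k:ℝ)*u) + η/u := by
    rw [Ssum, hsplit]
    have h1 : P L w1 w1 / (jphi n k 0 - jphi n k L)^1 ≤ 1/((k:ℝ)*u) := by
      rw [pow_one, hDL]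
      gcongr
      exact hd1 L w1
    have h2 : ∑ ℓ ∈ T.erase L, P ℓ w1 w1 / (jphi n k 0 - jphi n k ℓ)^1 ≤ η/u := by
      have h3 : ∀ ℓ ∈ T.erase L, P ℓ w1 w1 / (jphi n k 0 - jphi n k ℓ)^1
          ≤ P ℓ w1 w1 / u := by
        intro ℓ hℓ
        have hmem := Finset.mem_of_mem_erase hℓ
        rw [pow_one]
        gcongr
        · exact hPd ℓ w1
        · exact hDge ℓ hmem
      calc ∑ ℓ ∈ T.erase L, P ℓ w1 w1 / (jphi n k 0 - jphi n k ℓ)^1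
          ≤ ∑ ℓ ∈ T.erase L, P ℓ w1 w1 / u := Finset.sum_le_sum h3
        _ = (∑ ℓ ∈ T.erase L, P ℓ w1 w1) / u := by rw [Finset.sum_div]
        _ ≤ η/u := by gcongr; exact hrest w1
    linarith
  -- ======== S2 bounds ========
  have hS2low : (1-η)/((k:ℝ)*u)^2 ≤ Ssum n k P w1 w1 2 := by
    rw [Ssum]
    have hterm : (1-η)/((k:ℝ)*u)^2 ≤ P L w1 w1 / (jphi n k 0 - jphi n k L)^2 := by
      rw [hDL]
      gcongr
      exact hLB w1
    exact le_trans hterm (Finset.single_le_sum (htermpos w1 2) hLT)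
  have hS2high : Ssum n k P w1 w1 2 ≤ 1/((k:ℝ)*u)^2 + η/u^2 := by
    rw [Ssum, hsplit]
    have h1 : P L w1 w1 / (jphi n k 0 - jphi n k L)^2 ≤ 1/((k:ℝ)*u)^2 := by
      rw [hDL]
      gcongr
      exact hd1 L w1
    have h2 : ∑ ℓ ∈ T.erase L, P ℓ w1 w1 / (jphi n k 0 - jphi n k ℓ)^2 ≤ η/u^2 := by
      have h3 : ∀ ℓ ∈ T.erase L, P ℓ w1 w1 / (jphi n k 0 - jphi n k ℓ)^2
          ≤ P ℓ w1 w1 / u^2 := by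
        intro ℓ hℓ
        have hmem := Finset.mem_of_mem_erase hℓ
        exact div_le_div_of_nonneg_left (hPd ℓ w1) (by positivity)
          (pow_le_pow_left₀ hu0.le (hDge ℓ hmem) 2)
      calc ∑ ℓ ∈ T.erase L, P ℓ w1 w1 / (jphi n k 0 - jphi n k ℓ)^2
          ≤ ∑ ℓ ∈ T.erase L, P ℓ w1 w1 / u^2 := Finset.sum_le_sum h3
        _ = (∑ ℓ ∈ T.erase L, P ℓ w1 w1) / u^2 := by rw [Finset.sum_div]
        _ ≤ η/u^2 := by gcongr; exact hrest w1
    linarith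
  -- ======== S1' bound ========
  have hS1' : |Ssum n k P w1 w2 1| ≤ (2*Real.sqrt η + η)/((k:ℝ)*u) + η/u := by
    rw [Ssum, hsplit]
    have habs : |P L w1 w2 / (jphi n k 0 - jphi n k L)^1
        + ∑ ℓ ∈ T.erase L, P ℓ w1 w2 / (jphi n k 0 - jphi n k ℓ)^1|
        ≤ |P L w1 w2 / (jphi n k 0 - jphi n k L)^1|
          + ∑ ℓ ∈ T.erase L, |P ℓ w1 w2 / (jphi n k 0 - jphi n k ℓ)^1| := by
      refine le_trans (abs_add_le _ _) ?_
      gcongr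
      exact Finset.abs_sum_le_sum_abs _ _
    refine le_trans habs ?_
    have h1 : |P L w1 w2 / (jphi n k 0 - jphi n k L)^1| ≤ (2*Real.sqrt η + η)/((k:ℝ)*u) := by
      rw [pow_one, hDL, abs_div, abs_of_pos hku]
      gcongr
    have h2 : ∑ ℓ ∈ T.erase L, |P ℓ w1 w2 / (jphi n k 0 - jphi n k ℓ)^1| ≤ η/u := by
      have h3 : ∀ ℓ ∈ T.erase L, |P ℓ w1 w2 / (jphi n k 0 - jphi n k ℓ)^1|
          ≤ (P ℓ w1 w1 + P ℓ w2 w2)/2 / u := by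
        intro ℓ hℓ
        have hmem := Finset.mem_of_mem_erase hℓ
        rw [pow_one, abs_div, abs_of_pos (hDpos ℓ hmem)]
        gcongr
        · linarith [abs_nonneg (P ℓ w1 w2), hgod ℓ]
        · exact hgod ℓ
        · exact hDge ℓ hmem
      calc ∑ ℓ ∈ T.erase L, |P ℓ w1 w2 / (jphi n k 0 - jphi n k ℓ)^1|
          ≤ ∑ ℓ ∈ T.erase L, (P ℓ w1 w1 + P ℓ w2 w2)/2 / u := Finset.sum_le_sum h3
        _ = (∑ ℓ ∈ T.erase L, (P ℓ w1 w1 + P ℓ w2 w2))/2 / u := by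
            rw [← Finset.sum_div, ← Finset.sum_div]
        _ ≤ (η + η)/2/u := by
            gcongr
            rw [Finset.sum_add_distrib]
            exact add_le_add (hrest w1) (hrest w2)
        _ = η/u := by ring
    linarith
  -- ======== r = N/u facts ========
  set r : ℝ := N/u with hr
  have hr1 : 1 ≤ r := by rw [hr, le_div_iff₀ hu0]; linarith
  have hr2 : r ≤ 2 := by rw [hr, div_le_iff₀ hu0]; linarith
  have hrρ : r ≤ 1 + 2*(k:ℝ)/N := by
    rw [hr, hu]
    exact rhoUB (k:ℝ) N hk1 hN4
  -- ======== multiplying through ========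
  have hkN0 : (0:ℝ) < (k:ℝ)*N := by positivity
  have hg1a : 1 - η ≤ (k:ℝ)*N*(Ssum n k P w1 w1 1) := by
    have h := mul_le_mul_of_nonneg_left hS1low hkN0.le
    have heq : (k:ℝ)*N*((1-η)/((k:ℝ)*u)) = (1-η)*r := by
      rw [hr]; field_simp
    rw [heq] at h
    exact step1a η r _ h hη1 hr1
  have hg1b : (k:ℝ)*N*(Ssum n k P w1 w1 1) ≤ 1 + 3*(k:ℝ)*(2*(k:ℝ)/N) := by
    have h := mul_le_mul_of_nonneg_left hS1high hkN0.le
    have heq : (k:ℝ)*N*(1/((k:ℝ)*u) + η/u) = r + (k:ℝ)*η*r := by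
      rw [hr]; field_simp
    rw [heq] at h
    exact step1b (k:ℝ) η _ r _ h hr2 hrρ hη0 hηρ hρ0 hk1
  have hg2a : 1 - η ≤ (k:ℝ)^2*N^2*(Ssum n k P w1 w1 2) := by
    have h := mul_le_mul_of_nonneg_left hS2low (by positivity : (0:ℝ) ≤ (k:ℝ)^2*N^2)
    have heq : (k:ℝ)^2*N^2*((1-η)/((k:ℝ)*u)^2) = (1-η)*r^2 := by
      rw [hr]; field_simp
    rw [heq] at h
    exact step2a η r _ h hη1 hr1
  have hg2b : (k:ℝ)^2*N^2*(Ssum n k P w1 w1 2) ≤ 1 + 7*(k:ℝ)^2*(2*(k:ℝ)/N) := by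
    have h := mul_le_mul_of_nonneg_left hS2high (by positivity : (0:ℝ) ≤ (k:ℝ)^2*N^2)
    have heq : (k:ℝ)^2*N^2*(1/((k:ℝ)*u)^2 + η/u^2) = r^2 + (k:ℝ)^2*η*r^2 := by
      rw [hr]; field_simp
    rw [heq] at h
    exact step2b (k:ℝ) η _ r _ h hr1 hr2 hrρ hρ0 hρ1 hη0 hηρ hk1
  have hg3 : |(k:ℝ)*N*(Ssum n k P w1 w2 1)|
      ≤ 4*Real.sqrt η + 2*η + 2*(k:ℝ)*η := by
    have h := mul_le_mul_of_nonneg_left hS1' hkN0.le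
    have heq : (k:ℝ)*N*((2*Real.sqrt η + η)/((k:ℝ)*u) + η/u)
        = (2*Real.sqrt η + η)*r + (k:ℝ)*η*r := by
      rw [hr]; field_simp
    rw [heq] at h
    have habs : |(k:ℝ)*N*(Ssum n k P w1 w2 1)| = (k:ℝ)*N*|Ssum n k P w1 w2 1| := by
      rw [abs_mul, abs_of_pos hkN0]
    rw [habs]
    have h2 : (k:ℝ)*N*|Ssum n k P w1 w2 1| ≤ (2*Real.sqrt η + η)*r + (k:ℝ)*η*r := h
    have h3 := step3 (k:ℝ) η r ((k:ℝ)*N*|Ssum n k P w1 w2 1|) (Real.sqrt η) ?_ hr1 hr2 hη0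
      (Real.sqrt_nonneg η) hk1
    · rwa [abs_of_nonneg (by positivity : (0:ℝ) ≤ (k:ℝ)*N*|Ssum n k P w1 w2 1|)] at h3
    · rwa [abs_of_nonneg (by positivity : (0:ℝ) ≤ (k:ℝ)*N*|Ssum n k P w1 w2 1|)]
  -- ======== conclude ========
  have hfinal := final_numeric (k:ℝ) N ε η
    ((k:ℝ)*N*(Ssum n k P w1 w1 1)) ((k:ℝ)^2*N^2*(Ssum n k P w1 w1 2))
    ((k:ℝ)*N*(Ssum n k P w1 w2 1))
    hk1 hN0 hε hεN hε2N hη0 hηρ hg1a hg1b hg2a hg2b hg3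
  refine ⟨?_, ?_, ?_⟩
  · exact hfinal.1
  · exact hfinal.2.1
  · have heq3 : (k:ℝ)*N*(Ssum n k P w1 w1 1 + Ssum n k P w1 w2 1) - 1
        = ((k:ℝ)*N*(Ssum n k P w1 w1 1)) + ((k:ℝ)*N*(Ssum n k P w1 w2 1)) - 1 := by ring
    rw [heq3]
    exact hfinal.2.2
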